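/- arXiv:1008.1837 — 2 statements merged into one kernel-verified Lean document; each statement's English description precedes it below -/
import Mathlib

section
/- Let γ be a coloring of K_n^{6,4}. The function f(G',γ) = n' + rk_{Z²}(G',γ) − c' on edge-subsets is submodular: for any subgraphs G'' ⊆ G' and any colored edge ij ∉ E(G'), f(G''+ij,γ) − f(G'',γ) ≥ f(G'+ij,γ) − f(G',γ). -/
open Finset

section Defs
variable {V E : Type} [Fintype V] [DecidableEq V] [Fintype E] [DecidableEq E]

/-- Signed incidence of edge `e` at vertex `v`. -/
def incid (th hd : E → V) (e : E) (v : V) : ℤ :=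
  (if hd e = v then 1 else 0) - (if th e = v then 1 else 0)

/-- `x : E → ℤ` is a cycle (1-chain with zero boundary) supported on the edge set `S`. -/
def IsCycle (th hd : E → V) (S : Finset E) (x : E → ℤ) : Prop :=
  (∀ e ∉ S, x e = 0) ∧ ∀ v : V, ∑ e, x e * incid th hd e v = 0

/-- Signed color-sum of a chain. -/
def rho (γ : E → ℤ × ℤ) (x : E → ℤ) : ℤ × ℤ := ∑ e, x e • γ e

def q2 (p : ℤ × ℤ) : ℚ × ℚ := ((p.1 : ℚ), (p.2 : ℚ))

/-- The ℤ²-rank of the colored subgraph with edge set `S`. -/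
noncomputable def zrank (th hd : E → V) (γ : E → ℤ × ℤ) (S : Finset E) : ℕ :=
  Module.finrank ℚ (Submodule.span ℚ (q2 '' (rho γ '' {x | IsCycle th hd S x})))

/-- Adjacency via an edge in `S`. -/
def adjS (th hd : E → V) (S : Finset E) (u v : V) : Prop :=
  ∃ e ∈ S, (th e = u ∧ hd e = v) ∨ (th e = v ∧ hd e = u)

/-- Vertices spanned by the edge set `S`. -/
def verts (th hd : E → V) (S : Finset E) : Finset V := S.image th ∪ S.image hd

/-- Number of connected components of the subgraph induced by the edge set `S`
(on the vertices it spans). -/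
noncomputable def ncomp (th hd : E → V) (S : Finset E) : ℕ :=
  Nat.card (Quotient (Relation.EqvGen.setoid
    (fun a b : {v : V // v ∈ verts th hd S} => adjS th hd S a.1 b.1)))

/-- The subgraph with edge set `S` is connected and spans all vertices. -/
def Conn (th hd : E → V) (S : Finset E) : Prop :=
  ∀ u v : V, Relation.EqvGen (adjS th hd S) u v

/-- The function `f(G') = n' + rk_{ℤ²}(G') − c'`. -/
noncomputable def fZ (th hd : E → V) (γ : E → ℤ × ℤ) (S : Finset E) : ℤ :=
  ((verts th hd S).card : ℤ) + (zrank th hd γ S : ℤ) - (ncomp th hd S : ℤ)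

end Defs

/-- Edge set of the complete multigraph `K_n^{6,4}`. -/
def KE (n : ℕ) : Type :=
  ({p : Fin n × Fin n // p.1 < p.2} × Fin 6) ⊕ (Fin n × Fin 4)

instance (n : ℕ) : Fintype (KE n) := by unfold KE; infer_instance
instance (n : ℕ) : DecidableEq (KE n) := by unfold KE; infer_instance

def Kt (n : ℕ) : KE n → Fin n := Sum.elim (fun q => q.1.1.1) (fun q => q.1)
def Kh (n : ℕ) : KE n → Fin n := Sum.elim (fun q => q.1.1.2) (fun q => q.1)


/-!
Write `f(S) = |V| + rk(S) − c(S)`, where `c(S)` counts the components of `(V, S)` including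
isolated vertices. If the ends of a new edge `e` lie in different components of `S`, no cycle of
`S + e` uses `e`, so `c` drops by one, the rank is unchanged and `f` grows by exactly `1`.
Otherwise `e` closes a cycle `C`, `c` is unchanged and the colour span grows from `W(S)` to
`W(S) + ℚ·ρ(C)`. A cycle through `e` in `S'' + e` is also one in `S' + e`, and by the modular law
`dim (W + L) − dim W` is antitone in `W`; since the increment of `f` is at most `1` in any case,
submodularity follows.
-/

theorem Relation.EqvGen.apply_eq_of_forall {α β : Type*} {r : α → α → Prop} (g : α → β)
    (hg : ∀ a b, r a b → g a = g b) (a b : α) (h : Relation.EqvGen r a b) : g a = g b :=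
  congrArg (Quot.lift g hg) (Quot.eqvGen_sound h)

def Relation.EqvGen.quotientEquivSubtypeSum {α : Type*} (r : α → α → Prop) (p : α → Prop)
    [DecidablePred p] (hr : ∀ a b, r a b → p a ∧ p b) :
    Quotient (Relation.EqvGen.setoid r) ≃
      Quotient (Relation.EqvGen.setoid (fun a b : Subtype p => r a b)) ⊕ {a // ¬ p a} where
  toFun := Quotient.lift
    (fun a => if h : p a then .inl (Quotient.mk _ ⟨a, h⟩) else .inr ⟨a, h⟩)
    (Relation.EqvGen.apply_eq_of_forall _ fun a b hab => by
      rw [dif_pos (hr a b hab).1, dif_pos (hr a b hab).2]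
      exact congrArg Sum.inl (Quotient.sound (Relation.EqvGen.rel _ _ hab)))
  invFun := Sum.elim
    (Quotient.lift (fun a => Quotient.mk _ a.1)
      (Relation.EqvGen.apply_eq_of_forall _
        fun _ _ hab => Quotient.sound (Relation.EqvGen.rel _ _ hab : Relation.EqvGen r _ _)))
    (fun a => Quotient.mk _ a.1)
  left_inv := Quotient.ind fun a => by by_cases h : p a <;> simp [h]
  right_inv := by
    rintro (q | ⟨a, ha⟩)
    · induction q using Quotient.ind
      simp [Subtype.prop]
    · simp [ha]

theorem Nat.card_eq_card_add_one_of_surjective_of_injOn {α β : Type*} [Finite α] {π : α → β}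
    (hsurj : Function.Surjective π) {a₀ b₀ : α} (hne : a₀ ≠ b₀) (hπ : π a₀ = π b₀)
    (hinj : Set.InjOn π {b₀}ᶜ) : Nat.card α = Nat.card β + 1 := by
  classical
  have hbij : Function.Bijective (fun x : {x // x ≠ b₀} => π x) := by
    refine ⟨fun x y hxy => Subtype.ext (hinj x.2 y.2 hxy), fun y => ?_⟩
    obtain ⟨x, rfl⟩ := hsurj y
    by_cases hx : x = b₀
    · exact ⟨⟨a₀, hne⟩, hx ▸ hπ⟩
    · exact ⟨⟨x, hx⟩, rfl⟩
  rw [← Nat.card_congr (Equiv.optionSubtypeNe b₀), Finite.card_option,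
    Nat.card_congr (Equiv.ofBijective _ hbij)]

theorem Submodule.finrank_sup_add_finrank_le_of_le {K W : Type*} [DivisionRing K]
    [AddCommGroup W] [Module K W] [FiniteDimensional K W] {A B : Submodule K W} (hAB : A ≤ B)
    (L : Submodule K W) :
    Module.finrank K ↥(B ⊔ L) + Module.finrank K A ≤
      Module.finrank K ↥(A ⊔ L) + Module.finrank K B := by
  have hA := Submodule.finrank_sup_add_finrank_inf_eq A L
  have hB := Submodule.finrank_sup_add_finrank_inf_eq B L
  have hinf := Submodule.finrank_mono (inf_le_inf_right L hAB)
  omega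

section Components

variable {V E : Type} (th hd : E → V)

theorem adjS_mono {S T : Finset E} (hST : S ⊆ T) {u v : V} (h : adjS th hd S u v) :
    adjS th hd T u v :=
  let ⟨f, hf, hor⟩ := h; ⟨f, hST hf, hor⟩

theorem mem_verts_of_adjS [DecidableEq V] {S : Finset E} {u v : V} (h : adjS th hd S u v) :
    u ∈ verts th hd S ∧ v ∈ verts th hd S := by
  simp only [verts, Finset.mem_union, Finset.mem_image]
  obtain ⟨f, hf, ⟨rfl, rfl⟩ | ⟨rfl, rfl⟩⟩ := h
  exacts [⟨.inl ⟨f, hf, rfl⟩, .inr ⟨f, hf, rfl⟩⟩, ⟨.inr ⟨f, hf, rfl⟩, .inl ⟨f, hf, rfl⟩⟩]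

/-- The number of connected components of `(V, S)`, isolated vertices included. -/
noncomputable def ncompAll (S : Finset E) : ℕ :=
  Nat.card (Quotient (Relation.EqvGen.setoid (adjS th hd S)))

theorem ncompAll_add_card_verts [Fintype V] [DecidableEq V] (S : Finset E) :
    ncompAll th hd S + (verts th hd S).card = ncomp th hd S + Fintype.card V := by
  have hsplit := Nat.card_congr (Relation.EqvGen.quotientEquivSubtypeSum (adjS th hd S)
    (· ∈ verts th hd S) fun _ _ => mem_verts_of_adjS th hd)
  rw [Nat.card_sum, Nat.card_eq_fintype_card (α := {v // v ∉ _}), Fintype.card_subtype_compl,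
    Fintype.card_coe] at hsplit
  have := (verts th hd S).card_le_univ
  rw [ncompAll, ncomp, hsplit]
  omega

theorem eqvGen_adjS_insert_iff [DecidableEq E] {S : Finset E} {e : E}
    (he : Relation.EqvGen (adjS th hd S) (th e) (hd e)) {u v : V} :
    Relation.EqvGen (adjS th hd (insert e S)) u v ↔ Relation.EqvGen (adjS th hd S) u v := by
  refine ⟨fun h => Quotient.exact (Relation.EqvGen.apply_eq_of_forall
    (Quotient.mk (Relation.EqvGen.setoid (adjS th hd S))) ?_ u v h),
    Relation.EqvGen.mono (fun _ _ => adjS_mono th hd (Finset.subset_insert e S)) _ _⟩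
  rintro _ _ ⟨f, hf, hor⟩
  obtain rfl | hf := Finset.mem_insert.mp hf
  · obtain ⟨rfl, rfl⟩ | ⟨rfl, rfl⟩ := hor
    exacts [Quotient.sound he, (Quotient.sound he).symm]
  · exact Quotient.sound (.rel _ _ ⟨f, hf, hor⟩)

theorem ncompAll_insert_of_eqvGen [DecidableEq E] {S : Finset E} {e : E}
    (he : Relation.EqvGen (adjS th hd S) (th e) (hd e)) :
    ncompAll th hd (insert e S) = ncompAll th hd S :=
  Nat.card_congr (Quotient.congrRight fun _ _ => eqvGen_adjS_insert_iff th hd he)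

theorem ncompAll_insert_of_not_eqvGen [Finite V] [DecidableEq E] {S : Finset E} {e : E}
    (he : ¬ Relation.EqvGen (adjS th hd S) (th e) (hd e)) :
    ncompAll th hd S = ncompAll th hd (insert e S) + 1 := by
  classical
  set mk := Quotient.mk (Relation.EqvGen.setoid (adjS th hd S))
  have hne : mk (th e) ≠ mk (hd e) := fun h => he (Quotient.exact h)
  -- `retract` is constant on the classes of `S + e` and injective off the class of `hd e`.
  let retract : V → Quotient (Relation.EqvGen.setoid (adjS th hd S)) := fun v =>
    if mk v = mk (hd e) then mk (th e) else mk v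
  have hretract : ∀ u v, adjS th hd (insert e S) u v → retract u = retract v := by
    rintro _ _ ⟨f, hf, hor⟩
    obtain rfl | hf := Finset.mem_insert.mp hf
    · obtain ⟨rfl, rfl⟩ | ⟨rfl, rfl⟩ := hor <;> simp [retract]
    · have huv : mk _ = mk _ := Quotient.sound (Relation.EqvGen.rel _ _ ⟨f, hf, hor⟩)
      simp only [retract, huv]
  refine Nat.card_eq_card_add_one_of_surjective_of_injOn
    (π := Quotient.map id fun _ _ => Relation.EqvGen.mono (fun _ _ =>
      adjS_mono th hd (Finset.subset_insert e S)) _ _)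
    (Quotient.map_surjective _ Function.surjective_id) hne
    (Quotient.sound (.rel _ _ ⟨e, Finset.mem_insert_self e S, .inl ⟨rfl, rfl⟩⟩)) ?_
  rintro ⟨u⟩ hu ⟨v⟩ hv huv
  have hu : mk u ≠ mk (hd e) := hu
  have hv : mk v ≠ mk (hd e) := hv
  have h := Relation.EqvGen.apply_eq_of_forall retract hretract u v (Quotient.exact huv)
  simp only [retract, if_neg hu, if_neg hv] at h
  exact h

end Components

section Cycles

variable {V E : Type} [DecidableEq V] [Fintype E] (th hd : E → V)

def boundary : (E → ℤ) →ₗ[ℤ] (V → ℤ) :=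
  Fintype.linearCombination ℤ (incid th hd)

theorem boundary_apply (x : E → ℤ) (v : V) :
    boundary th hd x v = ∑ f, x f * incid th hd f v := by
  simp [boundary, Fintype.linearCombination_apply, Finset.sum_apply]

theorem isCycle_iff {S : Finset E} {x : E → ℤ} :
    IsCycle th hd S x ↔ (∀ f ∉ S, x f = 0) ∧ boundary th hd x = 0 := by
  simp only [IsCycle, funext_iff, boundary_apply, Pi.zero_apply]

theorem boundary_single [DecidableEq E] (f : E) :
    boundary th hd (Pi.single f 1) = Pi.single (hd f) 1 - Pi.single (th f) 1 := by
  ext v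
  simp [boundary, incid, Pi.single_apply, eq_comm]

theorem IsCycle.mono {S T : Finset E} (hST : S ⊆ T) {x : E → ℤ} (hx : IsCycle th hd S x) :
    IsCycle th hd T x :=
  ⟨fun f hf => hx.1 f (fun h => hf (hST h)), hx.2⟩

theorem sum_mul_boundary [Fintype V] (χ : V → ℤ) (x : E → ℤ) :
    ∑ v, χ v * boundary th hd x v = ∑ f, x f * (χ (hd f) - χ (th f)) := by
  simp only [boundary_apply, Finset.mul_sum]
  rw [Finset.sum_comm]
  refine Finset.sum_congr rfl fun f _ => ?_
  simp [incid, mul_sub, Finset.sum_sub_distrib, mul_comm]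

/-- Pair the cycle with the indicator of the component of `th e`. -/
theorem IsCycle.apply_eq_zero_of_not_eqvGen [Fintype V] [DecidableEq E] {S : Finset E} {e : E}
    (he : ¬ Relation.EqvGen (adjS th hd S) (th e) (hd e)) {x : E → ℤ}
    (hx : IsCycle th hd (insert e S) x) : x e = 0 := by
  classical
  let χ : V → ℤ := fun v => if Relation.EqvGen (adjS th hd S) (th e) v then 1 else 0
  have hχ : ∀ f ∈ S, χ (hd f) = χ (th f) := fun f hf => by
    have hedge : Relation.EqvGen (adjS th hd S) (th f) (hd f) := .rel _ _ ⟨f, hf, .inl ⟨rfl, rfl⟩⟩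
    simp only [χ]
    congr 1
    exact propext ⟨fun h => h.trans _ _ _ hedge.symm, fun h => h.trans _ _ _ hedge⟩
  have hpair := sum_mul_boundary th hd χ x
  rw [((isCycle_iff th hd).mp hx).2, Finset.sum_eq_single e] at hpair
  · simpa [χ, he, Relation.EqvGen.refl] using hpair
  · intro f _ hfe
    by_cases hf : f ∈ S
    · rw [hχ f hf, sub_self, mul_zero]
    · rw [hx.1 f (by simp [hf, hfe]), zero_mul]
  · simp

theorem exists_chain_of_eqvGen [DecidableEq E] {S : Finset E} {u v : V}
    (h : Relation.EqvGen (adjS th hd S) u v) :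
    ∃ x : E → ℤ, (∀ f ∉ S, x f = 0) ∧ boundary th hd x = Pi.single v 1 - Pi.single u 1 := by
  induction h with
  | rel u v huv =>
    obtain ⟨f, hf, ⟨rfl, rfl⟩ | ⟨rfl, rfl⟩⟩ := huv
    · refine ⟨Pi.single f 1, fun g hg => Pi.single_eq_of_ne (by rintro rfl; exact hg hf) _, ?_⟩
      exact boundary_single th hd f
    · refine ⟨-Pi.single f 1, fun g hg => ?_, ?_⟩
      · simp [Pi.single_eq_of_ne (show g ≠ f by rintro rfl; exact hg hf)]
      · rw [map_neg, boundary_single, neg_sub]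
  | refl u => exact ⟨0, fun _ _ => rfl, by simp⟩
  | symm u v _ ih =>
    obtain ⟨x, hxS, hx⟩ := ih
    exact ⟨-x, fun f hf => by simp [hxS f hf], by rw [map_neg, hx, neg_sub]⟩
  | trans u v w _ _ ih₁ ih₂ =>
    obtain ⟨x, hxS, hx⟩ := ih₁
    obtain ⟨y, hyS, hy⟩ := ih₂
    exact ⟨x + y, fun f hf => by simp [hxS f hf, hyS f hf], by
      rw [map_add, hx, hy, sub_add_sub_cancel']⟩

theorem exists_isCycle_insert_apply_eq_one [DecidableEq E] {S : Finset E} {e : E} (he : e ∉ S)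
    (h : Relation.EqvGen (adjS th hd S) (th e) (hd e)) :
    ∃ C : E → ℤ, IsCycle th hd (insert e S) C ∧ C e = 1 := by
  obtain ⟨x, hxS, hx⟩ := exists_chain_of_eqvGen th hd h.symm
  refine ⟨Pi.single e 1 + x, (isCycle_iff th hd).mpr ⟨fun f hf => ?_, ?_⟩, by simp [hxS e he]⟩
  · rw [Finset.mem_insert, not_or] at hf
    simp [hf.1, hxS f hf.2]
  · rw [map_add, boundary_single, hx, sub_add_sub_cancel, sub_self]

end Cycles

section Rank

variable {V E : Type} [DecidableEq V] [Fintype E] (th hd : E → V) (γ : E → ℤ × ℤ)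

noncomputable def colorSpan (S : Finset E) : Submodule ℚ (ℚ × ℚ) :=
  Submodule.span ℚ (q2 '' (rho γ '' {x | IsCycle th hd S x}))

theorem zrank_eq_finrank_colorSpan (S : Finset E) :
    zrank th hd γ S = Module.finrank ℚ (colorSpan th hd γ S) := rfl

theorem colorSpan_mono {S T : Finset E} (hST : S ⊆ T) :
    colorSpan th hd γ S ≤ colorSpan th hd γ T :=
  Submodule.span_mono (Set.image_mono (Set.image_mono fun _ => IsCycle.mono th hd hST))

theorem q2_rho_sub_smul (x C : E → ℤ) (c : ℤ) :
    q2 (rho γ x) = q2 (rho γ (x - c • C)) + (c : ℚ) • q2 (rho γ C) := by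
  have hlin : rho γ (x - c • C) = rho γ x - c • rho γ C :=
    show Fintype.linearCombination ℤ γ _ = _ by rw [map_sub, map_smul]; rfl
  simp only [hlin, q2, Prod.fst_sub, Prod.snd_sub, Prod.smul_fst, Prod.smul_snd, smul_eq_mul,
    Int.cast_sub, Int.cast_mul, Prod.mk_add_mk, Prod.smul_mk, sub_add_cancel]

/-- Every cycle `x` of `S + e` is `x e • C` plus a cycle of `S`. -/
theorem colorSpan_insert_eq_sup [DecidableEq E] {S : Finset E} {e : E} {C : E → ℤ}
    (hC : IsCycle th hd (insert e S) C) (hCe : C e = 1) :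
    colorSpan th hd γ (insert e S) = colorSpan th hd γ S ⊔ ℚ ∙ q2 (rho γ C) := by
  refine le_antisymm ?_ (sup_le (colorSpan_mono th hd γ (Finset.subset_insert e S))
    ((Submodule.span_singleton_le_iff_mem _ _).mpr (Submodule.subset_span ⟨_, ⟨C, hC, rfl⟩, rfl⟩)))
  rw [colorSpan, Submodule.span_le]
  rintro _ ⟨_, ⟨x, hx, rfl⟩, rfl⟩
  have hrest : IsCycle th hd S (x - x e • C) := by
    refine (isCycle_iff th hd).mpr ⟨fun f hf => ?_, ?_⟩
    · by_cases hfe : f = e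
      · simp [hfe, hCe]
      · simp [hx.1 f (by simp [hf, hfe]), hC.1 f (by simp [hf, hfe])]
    · rw [map_sub, map_smul, ((isCycle_iff th hd).mp hx).2, ((isCycle_iff th hd).mp hC).2,
        smul_zero, sub_zero]
  rw [q2_rho_sub_smul γ x C (x e)]
  exact Submodule.add_mem_sup (Submodule.subset_span ⟨_, ⟨_, hrest, rfl⟩, rfl⟩)
    (Submodule.smul_mem _ _ (Submodule.mem_span_singleton_self _))

theorem colorSpan_insert_of_not_eqvGen [Fintype V] [DecidableEq E] {S : Finset E} {e : E}
    (he : ¬ Relation.EqvGen (adjS th hd S) (th e) (hd e)) :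
    colorSpan th hd γ (insert e S) = colorSpan th hd γ S := by
  refine le_antisymm (Submodule.span_mono (Set.image_mono (Set.image_mono fun x hx => ?_)))
    (colorSpan_mono th hd γ (Finset.subset_insert e S))
  refine ⟨fun f hf => ?_, hx.2⟩
  by_cases hfe : f = e
  · exact hfe ▸ hx.apply_eq_zero_of_not_eqvGen th hd he
  · exact hx.1 f (by simp [hf, hfe])

end Rank

section Submodular

variable {V E : Type} [Fintype V] [DecidableEq V] [Fintype E] (th hd : E → V) (γ : E → ℤ × ℤ)

theorem fZ_eq (S : Finset E) :
    fZ th hd γ S = Fintype.card V + zrank th hd γ S - ncompAll th hd S := by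
  have := ncompAll_add_card_verts th hd S
  rw [fZ]
  omega

variable [DecidableEq E]

theorem fZ_insert_of_not_eqvGen {S : Finset E} {e : E}
    (he : ¬ Relation.EqvGen (adjS th hd S) (th e) (hd e)) :
    fZ th hd γ (insert e S) = fZ th hd γ S + 1 := by
  rw [fZ_eq, fZ_eq, ncompAll_insert_of_not_eqvGen th hd he, zrank_eq_finrank_colorSpan,
    zrank_eq_finrank_colorSpan, colorSpan_insert_of_not_eqvGen th hd γ he]
  push_cast
  ring

theorem fZ_insert_of_isCycle {S : Finset E} {e : E} {C : E → ℤ}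
    (hC : IsCycle th hd (insert e S) C) (hCe : C e = 1) :
    fZ th hd γ (insert e S) + Module.finrank ℚ (colorSpan th hd γ S) =
      fZ th hd γ S + Module.finrank ℚ ↥(colorSpan th hd γ S ⊔ ℚ ∙ q2 (rho γ C)) := by
  have hS : Relation.EqvGen (adjS th hd S) (th e) (hd e) := by
    by_contra he
    simp [hC.apply_eq_zero_of_not_eqvGen th hd he] at hCe
  rw [fZ_eq, fZ_eq, ncompAll_insert_of_eqvGen th hd hS, zrank_eq_finrank_colorSpan,
    zrank_eq_finrank_colorSpan, colorSpan_insert_eq_sup th hd γ hC hCe]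
  ring

theorem fZ_insert_le_add_one {S : Finset E} {e : E} (he : e ∉ S) :
    fZ th hd γ (insert e S) ≤ fZ th hd γ S + 1 := by
  by_cases hS : Relation.EqvGen (adjS th hd S) (th e) (hd e)
  · obtain ⟨C, hC, hCe⟩ := exists_isCycle_insert_apply_eq_one th hd he hS
    have hsup := Submodule.finrank_add_le_finrank_add_finrank (colorSpan th hd γ S)
      (ℚ ∙ q2 (rho γ C))
    have hline := finrank_span_le_card (R := ℚ) ({q2 (rho γ C)} : Set (ℚ × ℚ))
    have hinc := fZ_insert_of_isCycle th hd γ hC hCe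
    simp only [Set.toFinset_singleton, Finset.card_singleton] at hline
    omega
  · exact (fZ_insert_of_not_eqvGen th hd γ hS).le

theorem fZ_insert_sub_le_of_subset {S T : Finset E} (hST : S ⊆ T) {e : E} (he : e ∉ T) :
    fZ th hd γ (insert e T) - fZ th hd γ T ≤ fZ th hd γ (insert e S) - fZ th hd γ S := by
  by_cases hS : Relation.EqvGen (adjS th hd S) (th e) (hd e)
  · obtain ⟨C, hC, hCe⟩ := exists_isCycle_insert_apply_eq_one th hd (fun h => he (hST h)) hS
    have hincS := fZ_insert_of_isCycle th hd γ hC hCe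
    have hincT := fZ_insert_of_isCycle th hd γ (hC.mono th hd (Finset.insert_subset_insert e hST))
      hCe
    have hmodular := Submodule.finrank_sup_add_finrank_le_of_le (colorSpan_mono th hd γ hST)
      (ℚ ∙ q2 (rho γ C))
    omega
  · rw [fZ_insert_of_not_eqvGen th hd γ hS]
    linarith [fZ_insert_le_add_one th hd γ he]

end Submodular

/-- The function `f(G') = n' + rk_{ℤ²}(G') − c'` on edge-subsets of `K_n^{6,4}` is
submodular: for subgraphs `S'' ⊆ S'` and an edge `e ∉ S'`,
`f(S''+e) − f(S'') ≥ f(S'+e) − f(S')`. -/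
theorem statement5 (n : ℕ) (γ : KE n → ℤ × ℤ)
    (S' S'' : Finset (KE n)) (hsub : S'' ⊆ S') (e : KE n) (he : e ∉ S') :
    fZ (Kt n) (Kh n) γ (insert e S') - fZ (Kt n) (Kh n) γ S' ≤
      fZ (Kt n) (Kh n) γ (insert e S'') - fZ (Kt n) (Kh n) γ S'' :=
  fZ_insert_sub_le_of_subset (Kt n) (Kh n) γ hsub he
end

section
/- A Z²-colored multigraph (G,γ) with n vertices is a (2,2,k)-graph (i.e., has exactly 2n−2+2k edges where k = rk_{Z²}(G,γ), and every edge-induced subgraph with n' vertices, m' edges, c' components satisfies m' ≤ 2n' − 2 + 2·rk_{Z²}(G',γ) − 2(c'−1)) if and only if its edge set is the disjoint union of two spanning (1,1,k)-graphs. -/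
open Finset

/-!
Over `ℚ`, give each edge `e` the vector `(δ (hd e) - δ (th e), γ e) ∈ ℚ^V × ℚ²`. A rational
combination of edge vectors vanishes iff it is a cycle with zero color-sum, so the rank of these
vectors on an edge set `S` is the rank of its incidence vectors plus `rk_{ℤ²}(S)`, i.e.
`(n' - c') + rk_{ℤ²}(S) = f(S)`. The `(2,2,k)` count therefore reads `#S ≤ 2 f(S)`, and by Rado's
theorem for the doubled family this is exactly what is needed to split `E` into two independent
sets. An independent set has at most `n - 1 + k` edges, with equality exactly for a spanning
`(1,1,k)`-graph, and `#E = 2 (n - 1 + k)` forces equality on both sides. Conversely both halves of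
such a decomposition are independent, so `#S ≤ #(S ∩ A) + #(S ∩ B) ≤ 2 f(S)`.
-/

open Module Submodule Function

section LinearAlgebra

variable {K M N : Type*} [Field K] [AddCommGroup M] [Module K M] [AddCommGroup N] [Module K N]

theorem Submodule.finrank_map_add_finrank_inf_ker (f : M →ₗ[K] N) (p : Submodule K M)
    [FiniteDimensional K p] :
    finrank K (p.map f) + finrank K (p ⊓ LinearMap.ker f : Submodule K M) = finrank K p := by
  have h := LinearMap.finrank_range_add_finrank_ker (f.domRestrict p)
  rwa [LinearMap.range_domRestrict, LinearMap.ker_domRestrict, ← finrank_map_subtype_eq,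
    map_comap_subtype] at h

theorem Submodule.finrank_prod (p : Submodule K M) (q : Submodule K N)
    [FiniteDimensional K p] [FiniteDimensional K q] :
    finrank K (p.prod q) = finrank K p + finrank K q := by
  have h := finrank_sup_add_finrank_inf_eq (p.map (LinearMap.inl K M N))
    (q.map (LinearMap.inr K M N))
  have hdisj : p.map (LinearMap.inl K M N) ⊓ q.map (LinearMap.inr K M N) = ⊥ :=
    (LinearMap.disjoint_inl_inr.mono LinearMap.map_le_range LinearMap.map_le_range).eq_bot
  rwa [hdisj, finrank_bot, add_zero, ← LinearMap.prod_eq_sup_map,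
    ← (equivMapOfInjective _ LinearMap.inl_injective p).finrank_eq,
    ← (equivMapOfInjective _ LinearMap.inr_injective q).finrank_eq] at h

end LinearAlgebra

section Rado

variable {K W ι F : Type*} [Field K] [AddCommGroup W] [Module K W]

instance (v : F → W) (Y : Finset F) : FiniteDimensional K (span K (v '' ↑Y)) :=
  FiniteDimensional.span_of_finite K (Y.finite_toSet.image v)

theorem finrank_span_image_mono (v : F → W) {Y Y' : Finset F} (h : Y ⊆ Y') :
    Set.finrank K (v '' ↑Y) ≤ Set.finrank K (v '' ↑Y') :=
  Submodule.finrank_mono (span_mono (Set.image_mono (Finset.coe_subset.2 h)))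

theorem finrank_span_image_union_add_inter_le [DecidableEq F] (v : F → W) (Y Y' : Finset F) :
    Set.finrank K (v '' ↑(Y ∪ Y')) + Set.finrank K (v '' ↑(Y ∩ Y')) ≤
      Set.finrank K (v '' ↑Y) + Set.finrank K (v '' ↑Y') := by
  have hinter : span K (v '' ↑(Y ∩ Y')) ≤ span K (v '' ↑Y) ⊓ span K (v '' ↑Y') :=
    le_inf (span_mono (Set.image_mono (Finset.coe_subset.2 Finset.inter_subset_left)))
      (span_mono (Set.image_mono (Finset.coe_subset.2 Finset.inter_subset_right)))
  have hunion : span K (v '' ↑(Y ∪ Y')) = span K (v '' ↑Y) ⊔ span K (v '' ↑Y') := by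
    rw [coe_union, Set.image_union, span_union]
  have := finrank_sup_add_finrank_inf_eq (span K (v '' ↑Y)) (span K (v '' ↑Y'))
  unfold Set.finrank
  rw [hunion]
  have := Submodule.finrank_mono hinter
  omega

theorem linearIndepOn_iff_card_le_finrank_image {v : ι → W} {A : Finset ι} :
    LinearIndepOn K v ↑A ↔ #A ≤ Set.finrank K (v '' ↑A) := by
  rw [LinearIndepOn, linearIndependent_iff_card_le_finrank_span, ← Set.image_eq_range]
  simp

variable (K) in
def RadoCondition [DecidableEq F] (X : ι → Finset F) (v : F → W) : Prop :=
  ∀ S : Finset ι, #S ≤ Set.finrank K (v '' ↑(S.biUnion X))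

variable [DecidableEq ι] [DecidableEq F]

theorem mem_update_erase {X : ι → Finset F} {i j : ι} {x z : F} :
    z ∈ update X i ((X i).erase x) j ↔ z ∈ X j ∧ (j = i → z ≠ x) := by
  rcases eq_or_ne j i with rfl | hj <;> simp [*, and_comm]

/-- If both shrinkings fail, on `S₁` and `S₂` say, submodularity of the rank applied to the two
deficient unions bounds `#(S₁ ∪ S₂) + #((S₁ ∩ S₂).erase i)` by `#S₁ + #S₂ - 2`, contradicting
the condition for `X` itself. -/
theorem RadoCondition.update_erase_or {X : ι → Finset F} {v : F → W} (h : RadoCondition K X v)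
    (i : ι) {x y : F} (hxy : x ≠ y) :
    RadoCondition K (update X i ((X i).erase x)) v ∨
      RadoCondition K (update X i ((X i).erase y)) v := by
  by_contra! hfail
  simp only [RadoCondition, not_forall, not_le] at hfail
  obtain ⟨⟨S₁, hS₁⟩, ⟨S₂, hS₂⟩⟩ := hfail
  have biUnion_eq {S : Finset ι} (hi : i ∉ S) (z : F) :
      S.biUnion (update X i ((X i).erase z)) = S.biUnion X :=
    biUnion_congr rfl fun j hj => update_of_ne (ne_of_mem_of_not_mem hj hi) _ _
  have hi₁ : i ∈ S₁ := by
    by_contra hi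
    have := h S₁
    rw [← biUnion_eq hi x] at this
    omega
  have hi₂ : i ∈ S₂ := by
    by_contra hi
    have := h S₂
    rw [← biUnion_eq hi y] at this
    omega
  have hunion : (S₁ ∪ S₂).biUnion X ⊆
      S₁.biUnion (update X i ((X i).erase x)) ∪ S₂.biUnion (update X i ((X i).erase y)) := by
    intro z
    simp only [mem_biUnion, mem_union, mem_update_erase]
    grind
  have hinter : ((S₁ ∩ S₂).erase i).biUnion X ⊆
      S₁.biUnion (update X i ((X i).erase x)) ∩ S₂.biUnion (update X i ((X i).erase y)) := by
    intro z
    simp only [mem_biUnion, mem_inter, mem_erase, mem_update_erase]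
    grind
  have hcard : #(S₁ ∪ S₂) + #((S₁ ∩ S₂).erase i) + 1 = #S₁ + #S₂ := by
    rw [card_erase_of_mem (mem_inter.2 ⟨hi₁, hi₂⟩), ← card_union_add_card_inter]
    have : 0 < #(S₁ ∩ S₂) := card_pos.2 ⟨i, mem_inter.2 ⟨hi₁, hi₂⟩⟩
    omega
  have := h (S₁ ∪ S₂)
  have := h ((S₁ ∩ S₂).erase i)
  have := finrank_span_image_mono (K := K) v hunion
  have := finrank_span_image_mono (K := K) v hinter
  have := finrank_span_image_union_add_inter_le (K := K) v
    (S₁.biUnion (update X i ((X i).erase x))) (S₂.biUnion (update X i ((X i).erase y)))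
  omega

theorem RadoCondition.exists_linearIndependent [Fintype ι] {X : ι → Finset F} {v : F → W}
    (h : RadoCondition K X v) :
    ∃ φ : ι → F, (∀ i, φ i ∈ X i) ∧ LinearIndependent K (v ∘ φ) := by
  induction hn : ∑ i, #(X i) using Nat.strong_induction_on generalizing X with
  | _ n ih =>
    by_cases hbig : ∃ i, 1 < #(X i)
    · obtain ⟨i, hi⟩ := hbig
      obtain ⟨x, hx, y, hy, hxy⟩ := one_lt_card.1 hi
      have shrink {z : F} (hz : z ∈ X i) (h' : RadoCondition K (update X i ((X i).erase z)) v) :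
          ∃ φ : ι → F, (∀ i, φ i ∈ X i) ∧ LinearIndependent K (v ∘ φ) := by
        have hlt : ∑ j, #(update X i ((X i).erase z) j) < n := hn ▸
          sum_lt_sum (fun j _ => card_le_card fun w hw => (mem_update_erase.1 hw).1)
            ⟨i, mem_univ i, by simpa using card_erase_lt_of_mem hz⟩
        obtain ⟨φ, hφ, hind⟩ := ih _ hlt h' rfl
        exact ⟨φ, fun j => (mem_update_erase.1 (hφ j)).1, hind⟩
      exact (h.update_erase_or i hxy).elim (shrink hx) (shrink hy)
    · push Not at hbig
      have hsingle : ∀ i, ∃ a, X i = {a} := fun i => by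
        refine card_eq_one.1 (le_antisymm (hbig i) (card_pos.2 (nonempty_iff_ne_empty.2 ?_)))
        intro hXi
        have := h {i}
        simp [hXi, Set.finrank] at this
      choose φ hφ using hsingle
      refine ⟨φ, fun i => by simp [hφ], ?_⟩
      rw [linearIndependent_iff_card_le_finrank_span]
      convert h univ
      · simp
      · ext w
        simp [hφ]

theorem card_inter_le_finrank_of_linearIndepOn {v : ι → W} {A : Finset ι}
    (hA : LinearIndepOn K v ↑A) (S : Finset ι) : #(S ∩ A) ≤ Set.finrank K (v '' ↑S) :=
  (linearIndepOn_iff_card_le_finrank_image.1 (hA.mono (coe_subset.2 inter_subset_right))).trans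
    (finrank_span_image_mono v inter_subset_left)

theorem exists_linearIndependent_partition [Fintype ι] {W₁ W₂ : Type*} [AddCommGroup W₁]
    [Module K W₁] [AddCommGroup W₂] [Module K W₂] (v₁ : ι → W₁) (v₂ : ι → W₂)
    (h : ∀ S : Finset ι, #S ≤ Set.finrank K (v₁ '' ↑S) + Set.finrank K (v₂ '' ↑S)) :
    ∃ A : Finset ι, LinearIndepOn K v₁ ↑A ∧ LinearIndepOn K v₂ ↑Aᶜ := by
  let v : ι ⊕ ι → W₁ × W₂ := Sum.elim (LinearMap.inl K W₁ W₂ ∘ v₁) (LinearMap.inr K W₁ W₂ ∘ v₂)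
  have hrado : RadoCondition K (fun i => {Sum.inl i, Sum.inr i}) v := by
    intro S
    have hY : S.biUnion (fun i => {Sum.inl i, Sum.inr i}) = S.disjSum S := by
      ext (a | a) <;> simp
    have himage : v '' ↑(S.disjSum S) =
        LinearMap.inl K W₁ W₂ '' (v₁ '' ↑S) ∪ LinearMap.inr K W₁ W₂ '' (v₂ '' ↑S) := by
      ext w
      simp [v, Set.image_image]
    rw [hY, Set.finrank, himage, LinearMap.span_inl_union_inr, Submodule.finrank_prod]
    exact h S
  obtain ⟨φ, hφ, hind⟩ := hrado.exists_linearIndependent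
  have hφ' : ∀ i, φ i = Sum.inl i ∨ φ i = Sum.inr i := by simpa using hφ
  set A := univ.filter fun i => φ i = Sum.inl i
  refine ⟨A, LinearIndependent.of_comp (LinearMap.inl K W₁ W₂) ?_,
    LinearIndependent.of_comp (LinearMap.inr K W₁ W₂) ?_⟩
  · have hcomp :
        (LinearMap.inl K W₁ W₂ ∘ fun i : ↥(A : Set ι) => v₁ i) = (v ∘ φ) ∘ Subtype.val := by
      funext i
      simp [(mem_filter.1 i.2).2, v]
    exact hcomp ▸ hind.comp _ Subtype.val_injective
  · have hcomp : (LinearMap.inr K W₁ W₂ ∘ fun i : ↥((Aᶜ : Finset ι) : Set ι) => v₂ i) =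
        (v ∘ φ) ∘ Subtype.val := by
      funext i
      have hi : φ i.1 ≠ Sum.inl i.1 := by simpa [A] using i.2
      simp [(hφ' i).resolve_left hi, v]
    exact hcomp ▸ hind.comp _ Subtype.val_injective

end Rado

section Incidence

variable (K : Type*) {α : Type*} [Field K] [DecidableEq α]

def incidenceSpan (r : α → α → Prop) : Submodule K (α → K) :=
  span K {f | ∃ a b, r a b ∧ Pi.single b 1 - Pi.single a 1 = f}

variable {K}

theorem single_sub_single_mem_incidenceSpan {r : α → α → Prop} {a b : α}
    (h : Relation.EqvGen r a b) : Pi.single b 1 - Pi.single a 1 ∈ incidenceSpan K r := by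
  induction h with
  | rel a b hab => exact subset_span ⟨a, b, hab, rfl⟩
  | refl a => simp
  | symm a b _ ih => simpa using neg_mem ih
  | trans a b c _ _ ihab ihbc => simpa using add_mem ihbc ihab

theorem finrank_incidenceSpan_subtype (r : α → α → Prop) {X : Finset α}
    (hX : ∀ a b, r a b → a ∈ X ∧ b ∈ X) :
    finrank K (incidenceSpan K fun a b : X => r a b) = finrank K (incidenceSpan K r) := by
  let ι : (X → K) →ₗ[K] α → K := Fintype.linearCombination K fun a => Pi.single a.1 1
  have hι : Function.Injective ι := fun f g hfg => funext fun a => by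
    simpa [ι, Fintype.linearCombination_apply, Pi.single_apply] using congrFun hfg a.1
  have hmap : (incidenceSpan K fun a b : X => r a b).map ι = incidenceSpan K r := by
    rw [incidenceSpan, map_span]
    congr 1
    ext f
    constructor
    · rintro ⟨_, ⟨a, b, h, rfl⟩, rfl⟩
      exact ⟨a, b, h, by simp [ι]⟩
    · rintro ⟨a, b, h, rfl⟩
      exact ⟨_, ⟨⟨a, (hX a b h).1⟩, ⟨b, (hX a b h).2⟩, h, rfl⟩, by simp [ι]⟩
  rw [← hmap, (equivMapOfInjective ι hι _).finrank_eq]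

variable [Fintype α]

theorem card_le_finrank_incidenceSpan_add_card_quotient (r : α → α → Prop) :
    Fintype.card α ≤
      finrank K (incidenceSpan K r) + Nat.card (Quotient (Relation.EqvGen.setoid r)) := by
  classical
  set s := Relation.EqvGen.setoid r
  set reps : Submodule K (α → K) := span K (Set.range fun q : Quotient s => Pi.single q.out 1)
  have htop : incidenceSpan K r ⊔ reps = ⊤ := by
    rw [eq_top_iff, ← (Pi.basisFun K α).span_eq, span_le]
    rintro _ ⟨a, rfl⟩
    have h₁ : Pi.single a 1 - Pi.single (⟦a⟧ : Quotient s).out 1 ∈ incidenceSpan K r :=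
      single_sub_single_mem_incidenceSpan (Quotient.mk_out a)
    have h₂ : Pi.single (⟦a⟧ : Quotient s).out 1 ∈ reps := subset_span ⟨_, rfl⟩
    simpa using add_mem (mem_sup_left h₁) (mem_sup_right h₂)
  have hsup := finrank_add_le_finrank_add_finrank (incidenceSpan K r) reps
  rw [htop, finrank_top, finrank_fintype_fun_eq_card] at hsup
  have hreps : finrank K reps ≤ Fintype.card (Quotient s) := finrank_range_le_card _
  rw [Nat.card_eq_fintype_card]
  omega

theorem finrank_incidenceSpan_add_card_quotient_le (r : α → α → Prop) :
    finrank K (incidenceSpan K r) + Nat.card (Quotient (Relation.EqvGen.setoid r)) ≤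
      Fintype.card α := by
  classical
  set s := Relation.EqvGen.setoid r
  let σ : (α → K) →ₗ[K] Quotient s → K := Fintype.linearCombination K fun a => Pi.single ⟦a⟧ 1
  have hker : incidenceSpan K r ≤ LinearMap.ker σ := by
    refine span_le.2 ?_
    rintro _ ⟨a, b, hab, rfl⟩
    have : (⟦a⟧ : Quotient s) = ⟦b⟧ := Quotient.sound (Relation.EqvGen.rel a b hab)
    simp [σ, this]
  have hrange : LinearMap.range σ = ⊤ := by
    rw [eq_top_iff, ← (Pi.basisFun K _).span_eq, span_le]
    rintro _ ⟨q, rfl⟩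
    exact ⟨Pi.single q.out 1, by simp [σ]⟩
  have hrn := LinearMap.finrank_range_add_finrank_ker σ
  rw [hrange, finrank_top, finrank_fintype_fun_eq_card, finrank_fintype_fun_eq_card] at hrn
  have := Submodule.finrank_mono hker
  rw [Nat.card_eq_fintype_card]
  omega

theorem finrank_incidenceSpan_add_card_quotient (r : α → α → Prop) :
    finrank K (incidenceSpan K r) + Nat.card (Quotient (Relation.EqvGen.setoid r)) =
      Fintype.card α :=
  (finrank_incidenceSpan_add_card_quotient_le r).antisymm
    (card_le_finrank_incidenceSpan_add_card_quotient r)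

end Incidence

section Chains

variable {V E : Type}

noncomputable def chainBoundary [Fintype E] [DecidableEq V] (th hd : E → V) :
    (E → ℚ) →ₗ[ℚ] V → ℚ :=
  Fintype.linearCombination ℚ fun e => Pi.single (hd e) 1 - Pi.single (th e) 1

noncomputable def chainColor [Fintype E] (γ : E → ℤ × ℤ) : (E → ℚ) →ₗ[ℚ] ℚ × ℚ :=
  Fintype.linearCombination ℚ fun e => q2 (γ e)

def chainsOn (S : Finset E) : Submodule ℚ (E → ℚ) where
  carrier := {x | ∀ e ∉ S, x e = 0}
  add_mem' hx hy e he := by simp [hx e he, hy e he]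
  zero_mem' _ _ := rfl
  smul_mem' c x hx e he := by simp [hx e he]

theorem mem_chainsOn {S : Finset E} {x : E → ℚ} : x ∈ chainsOn S ↔ ∀ e ∉ S, x e = 0 :=
  Iff.rfl

noncomputable def cycleSpace [Fintype E] [DecidableEq V] (th hd : E → V) (S : Finset E) :
    Submodule ℚ (E → ℚ) :=
  chainsOn S ⊓ LinearMap.ker (chainBoundary th hd)

variable [Fintype E] [DecidableEq V]

theorem chainBoundary_apply (th hd : E → V) (x : E → ℚ) (v : V) :
    chainBoundary th hd x v = ∑ e, x e * incid th hd e v := by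
  simp [chainBoundary, Fintype.linearCombination_apply, incid, Pi.single_apply, @eq_comm _ v]

theorem chainBoundary_single [DecidableEq E] (th hd : E → V) (e : E) :
    chainBoundary th hd (Pi.single e 1) = Pi.single (hd e) 1 - Pi.single (th e) 1 := by
  simp [chainBoundary]

theorem chainColor_intCast (γ : E → ℤ × ℤ) (x : E → ℤ) :
    chainColor γ (fun e => (x e : ℚ)) = q2 (rho γ x) := by
  ext <;> simp [chainColor, Fintype.linearCombination_apply, rho, q2, Prod.fst_sum, Prod.snd_sum]

theorem span_single_eq_chainsOn [DecidableEq E] (S : Finset E) :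
    span ℚ ((fun e => Pi.single e (1 : ℚ)) '' ↑S) = chainsOn S := by
  refine le_antisymm (span_le.2 ?_) fun x hx => ?_
  · rintro _ ⟨e, he, rfl⟩ e' he'
    exact Pi.single_eq_of_ne (by rintro rfl; exact he' he) _
  · rw [← Finset.univ_sum_single x]
    refine sum_mem fun e _ => ?_
    by_cases he : e ∈ S
    · rw [← mul_one (x e), ← smul_eq_mul, Pi.single_smul]
      exact smul_mem _ _ (subset_span (Set.mem_image_of_mem _ (mem_coe.2 he)))
    · simp [hx e he]

theorem isCycle_iff_intCast_mem (th hd : E → V) (S : Finset E) (x : E → ℤ) :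
    IsCycle th hd S x ↔ (fun e => (x e : ℚ)) ∈ cycleSpace th hd S := by
  simp only [IsCycle, cycleSpace, Submodule.mem_inf, LinearMap.mem_ker, funext_iff,
    Pi.zero_apply, chainBoundary_apply, mem_chainsOn]
  norm_cast

-- Clearing denominators, every rational cycle is a rational multiple of an integer one.
theorem span_intCast_isCycle (th hd : E → V) (S : Finset E) :
    span ℚ ((fun x e => (x e : ℚ)) '' {x | IsCycle th hd S x}) = cycleSpace th hd S := by
  refine le_antisymm (span_le.2 ?_) fun y hy => ?_
  · rintro _ ⟨x, hx, rfl⟩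
    exact (isCycle_iff_intCast_mem th hd S x).1 hx
  obtain ⟨b, hb⟩ := IsLocalization.exist_integer_multiples_of_finite (nonZeroDivisors ℤ) y
  choose x hx using hb
  have hxy : (fun e => (x e : ℚ)) = ((b : ℤ) : ℚ) • y := by
    funext e
    simpa [zsmul_eq_mul] using hx e
  have hb0 : ((b : ℤ) : ℚ) ≠ 0 := by exact_mod_cast nonZeroDivisors.coe_ne_zero b
  have hcyc : IsCycle th hd S x :=
    (isCycle_iff_intCast_mem th hd S x).2 (hxy ▸ smul_mem _ _ hy)
  have : y = ((b : ℤ) : ℚ)⁻¹ • fun e => (x e : ℚ) := by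
    rw [hxy, smul_smul, inv_mul_cancel₀ hb0, one_smul]
  exact this ▸ smul_mem _ _ (subset_span ⟨x, hcyc, rfl⟩)

theorem zrank_eq_finrank_map_cycleSpace (th hd : E → V) (γ : E → ℤ × ℤ) (S : Finset E) :
    zrank th hd γ S = finrank ℚ ((cycleSpace th hd S).map (chainColor γ)) := by
  rw [zrank, ← span_intCast_isCycle, ← span_image, Set.image_image, Set.image_image,
    funext (chainColor_intCast γ)]

end Chains

section ColoredGraph

variable {V E : Type} (th hd : E → V)

theorem conn_iff_subsingleton (S : Finset E) :
    Conn th hd S ↔ Subsingleton (Quotient (Relation.EqvGen.setoid (adjS th hd S))) :=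
  ⟨fun h => ⟨Quotient.ind₂ fun u v => Quotient.sound (h u v)⟩, fun _ u v =>
    Quotient.exact (Subsingleton.elim (⟦u⟧ : Quotient (Relation.EqvGen.setoid _)) ⟦v⟧)⟩

section Connectivity

variable [Fintype V] [DecidableEq V]

theorem card_le_finrank_incidenceSpan_add_one {S : Finset E} (h : Conn th hd S) :
    Fintype.card V ≤ finrank ℚ (incidenceSpan ℚ (adjS th hd S)) + 1 := by
  have := finrank_incidenceSpan_add_card_quotient (K := ℚ) (adjS th hd S)
  have := Finite.card_le_one_iff_subsingleton.2 ((conn_iff_subsingleton th hd S).1 h)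
  omega

theorem finrank_incidenceSpan_lt_card [Nonempty V] (S : Finset E) :
    finrank ℚ (incidenceSpan ℚ (adjS th hd S)) < Fintype.card V := by
  have := finrank_incidenceSpan_add_card_quotient (K := ℚ) (adjS th hd S)
  have : Nonempty (Quotient (Relation.EqvGen.setoid (adjS th hd S))) := .map (⟦·⟧) ‹_›
  have : 0 < Nat.card (Quotient (Relation.EqvGen.setoid (adjS th hd S))) := Nat.card_pos
  omega

theorem conn_of_finrank_incidenceSpan_add_one {S : Finset E}
    (h : finrank ℚ (incidenceSpan ℚ (adjS th hd S)) + 1 = Fintype.card V) : Conn th hd S := by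
  have := finrank_incidenceSpan_add_card_quotient (K := ℚ) (adjS th hd S)
  exact (conn_iff_subsingleton th hd S).2 (Finite.card_le_one_iff_subsingleton.1 (by omega))

end Connectivity

variable [DecidableEq V] (γ : E → ℤ × ℤ)

def edgeVec (e : E) : (V → ℚ) × (ℚ × ℚ) :=
  (Pi.single (hd e) 1 - Pi.single (th e) 1, q2 (γ e))

theorem finrank_incidenceSpan_adjS_add_ncomp (S : Finset E) :
    finrank ℚ (incidenceSpan ℚ (adjS th hd S)) + ncomp th hd S = #(verts th hd S) := by
  have hverts : ∀ u v, adjS th hd S u v → u ∈ verts th hd S ∧ v ∈ verts th hd S := by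
    rintro u v ⟨e, he, ⟨rfl, rfl⟩ | ⟨rfl, rfl⟩⟩ <;> simp [verts] <;> grind
  rw [← finrank_incidenceSpan_subtype _ hverts, ncomp, finrank_incidenceSpan_add_card_quotient,
    Fintype.card_coe]

variable [Fintype E]

theorem zrank_mono {S T : Finset E} (h : S ⊆ T) : zrank th hd γ S ≤ zrank th hd γ T := by
  simp only [zrank_eq_finrank_map_cycleSpace, cycleSpace]
  exact Submodule.finrank_mono
    (map_mono (inf_le_inf_right _ fun x hx e he => hx e fun h' => he (h h')))

variable [DecidableEq E]

theorem map_chainBoundary_chainsOn (S : Finset E) :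
    (chainsOn S).map (chainBoundary th hd) = incidenceSpan ℚ (adjS th hd S) := by
  rw [← span_single_eq_chainsOn, map_span, Set.image_image]
  simp_rw [chainBoundary_single]
  apply le_antisymm <;> refine span_le.2 ?_
  · rintro _ ⟨e, he, rfl⟩
    exact subset_span ⟨th e, hd e, ⟨e, he, Or.inl ⟨rfl, rfl⟩⟩, rfl⟩
  · rintro _ ⟨a, b, ⟨e, he, ⟨rfl, rfl⟩ | ⟨rfl, rfl⟩⟩, rfl⟩
    · exact subset_span ⟨e, he, rfl⟩
    · have hgen : Pi.single (hd e) 1 - Pi.single (th e) 1 ∈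
          span ℚ ((fun e => (Pi.single (hd e) 1 - Pi.single (th e) 1 : V → ℚ)) '' ↑S) :=
        subset_span ⟨e, he, rfl⟩
      simpa using neg_mem hgen

theorem span_edgeVec (S : Finset E) :
    span ℚ (edgeVec th hd γ '' ↑S) =
      (chainsOn S).map ((chainBoundary th hd).prod (chainColor γ)) := by
  rw [← span_single_eq_chainsOn, map_span, Set.image_image]
  congr 2
  funext e
  simp [edgeVec, chainBoundary_single, chainColor]

theorem finrank_span_edgeVec (S : Finset E) :
    Set.finrank ℚ (edgeVec th hd γ '' ↑S) =
      finrank ℚ (incidenceSpan ℚ (adjS th hd S)) + zrank th hd γ S := by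
  have hrank :=
    (chainsOn S).finrank_map_add_finrank_inf_ker ((chainBoundary th hd).prod (chainColor γ))
  have hzrank := (cycleSpace th hd S).finrank_map_add_finrank_inf_ker (chainColor γ)
  have hcycle := (chainsOn S).finrank_map_add_finrank_inf_ker (chainBoundary th hd)
  rw [LinearMap.ker_prod, ← inf_assoc] at hrank
  rw [Set.finrank, span_edgeVec, ← map_chainBoundary_chainsOn, zrank_eq_finrank_map_cycleSpace]
  unfold cycleSpace at hzrank ⊢
  omega

theorem finrank_span_edgeVec_eq_fZ (S : Finset E) :
    (Set.finrank ℚ (edgeVec th hd γ '' ↑S) : ℤ) = fZ th hd γ S := by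
  have := finrank_incidenceSpan_adjS_add_ncomp th hd S
  rw [finrank_span_edgeVec, fZ]
  omega

theorem zrank_le_card (S : Finset E) : zrank th hd γ S ≤ #S := by
  classical
  have h := finrank_span_finset_le_card (R := ℚ) (S.image (edgeVec th hd γ))
  rw [coe_image, finrank_span_edgeVec] at h
  have := card_image_le (s := S) (f := edgeVec th hd γ)
  omega

end ColoredGraph

section Spanning

variable {V E : Type} [Fintype V] [DecidableEq V] [Fintype E] [DecidableEq E]
  (th hd : E → V) (γ : E → ℤ × ℤ)

theorem linearIndepOn_edgeVec_of_conn {k : ℕ} {A : Finset E} (hconn : Conn th hd A)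
    (hcard : (#A : ℤ) = Fintype.card V - 1 + k) (hz : zrank th hd γ A = k) :
    LinearIndepOn ℚ (edgeVec th hd γ) ↑A := by
  rw [linearIndepOn_iff_card_le_finrank_image, finrank_span_edgeVec]
  have := card_le_finrank_incidenceSpan_add_one th hd hconn
  omega

theorem card_le_of_linearIndepOn_edgeVec [Nonempty V] {A : Finset E}
    (hA : LinearIndepOn ℚ (edgeVec th hd γ) ↑A) :
    (#A : ℤ) ≤ Fintype.card V - 1 + zrank th hd γ univ := by
  have h := linearIndepOn_iff_card_le_finrank_image.1 hA
  rw [finrank_span_edgeVec] at h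
  have := finrank_incidenceSpan_lt_card th hd A
  have := zrank_mono th hd γ (subset_univ A)
  omega

theorem spanning_of_linearIndepOn_edgeVec [Nonempty V] {k : ℕ}
    (hk : zrank th hd γ univ = k) {A : Finset E}
    (hA : LinearIndepOn ℚ (edgeVec th hd γ) ↑A)
    (hcard : (Fintype.card V : ℤ) - 1 + k ≤ #A) :
    Conn th hd A ∧ (#A : ℤ) = Fintype.card V - 1 + k ∧ zrank th hd γ A = k := by
  have h := linearIndepOn_iff_card_le_finrank_image.1 hA
  rw [finrank_span_edgeVec] at h
  have := finrank_incidenceSpan_lt_card th hd A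
  have := zrank_mono th hd γ (subset_univ A)
  exact ⟨conn_of_finrank_incidenceSpan_add_one th hd (by omega), by omega, by omega⟩

end Spanning

/-- A ℤ²-colored multigraph of ℤ²-rank `k` is a `(2,2,k)`-graph (it has `2n − 2 + 2k` edges
and every edge-induced subgraph satisfies `m' ≤ 2n' − 2 + 2·rk_{ℤ²} − 2(c'−1)`) iff its edge
set is the disjoint union of two spanning `(1,1,k)`-graphs. -/
theorem statement10 {V E : Type} [Fintype V] [DecidableEq V] [Fintype E] [DecidableEq E]
    (th hd : E → V) (γ : E → ℤ × ℤ) (k : ℕ)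
    (hk : zrank th hd γ Finset.univ = k) :
    ((Fintype.card E : ℤ) = 2 * Fintype.card V - 2 + 2 * k ∧
      ∀ S : Finset E, (S.card : ℤ) ≤
        2 * ((verts th hd S).card : ℤ) - 2 + 2 * (zrank th hd γ S : ℤ)
          - 2 * ((ncomp th hd S : ℤ) - 1)) ↔
    (∃ A B : Finset E, A ∪ B = Finset.univ ∧ A ∩ B = ∅ ∧
      (Conn th hd A ∧ (A.card : ℤ) = (Fintype.card V : ℤ) - 1 + k ∧ zrank th hd γ A = k) ∧
      (Conn th hd B ∧ (B.card : ℤ) = (Fintype.card V : ℤ) - 1 + k ∧ zrank th hd γ B = k)) := by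
  constructor
  · rintro ⟨hE, hsparse⟩
    rcases isEmpty_or_nonempty V with hV | hV
    · have : IsEmpty E := ⟨fun e => hV.elim (th e)⟩
      have := zrank_le_card th hd γ univ
      rw [card_univ, Fintype.card_eq_zero, hk] at this
      rw [Fintype.card_eq_zero, Fintype.card_eq_zero] at hE
      omega
    obtain ⟨A, hA, hAc⟩ := exists_linearIndependent_partition (K := ℚ)
      (edgeVec th hd γ) (edgeVec th hd γ) fun S => by
        have hrank := finrank_span_edgeVec_eq_fZ th hd γ S
        have := hsparse S
        unfold fZ at hrank
        omega
    have hA' := card_le_of_linearIndepOn_edgeVec th hd γ hA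
    have hAc' := card_le_of_linearIndepOn_edgeVec th hd γ hAc
    have hE' := card_add_card_compl A
    exact ⟨A, Aᶜ, union_compl A, inter_compl A,
      spanning_of_linearIndepOn_edgeVec th hd γ hk hA (by omega),
      spanning_of_linearIndepOn_edgeVec th hd γ hk hAc (by omega)⟩
  · rintro ⟨A, B, hunion, hinter, ⟨hAconn, hAcard, hAz⟩, ⟨hBconn, hBcard, hBz⟩⟩
    have hA := linearIndepOn_edgeVec_of_conn th hd γ hAconn hAcard hAz
    have hB := linearIndepOn_edgeVec_of_conn th hd γ hBconn hBcard hBz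
    have hE : #A + #B = Fintype.card E := by
      rw [← card_union_of_disjoint (disjoint_iff_inter_eq_empty.2 hinter), hunion, card_univ]
    refine ⟨by omega, fun S => ?_⟩
    have hS : #S ≤ #(S ∩ A) + #(S ∩ B) :=
      (card_le_card (by rw [← inter_union_distrib_left, hunion, inter_univ])).trans
        (card_union_le _ _)
    have hSA := card_inter_le_finrank_of_linearIndepOn hA S
    have hSB := card_inter_le_finrank_of_linearIndepOn hB S
    have hrank := finrank_span_edgeVec_eq_fZ th hd γ S
    unfold fZ at hrank
    omega
end
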